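/- arXiv:2504.19527 — 2 statements merged into one kernel-verified Lean document; each statement's English description precedes it below -/
import Mathlib

section
/- Identifiability of the long-term average treatment effect ATE (Theorem 4.2). Assume monotone missing, strong ignorability, and sequential missing, and that P({A=a} ∩ {R₃=1}) > 0 for a ∈ {0,1}. For a ∈ {0,1}, let m_a : 𝒳 × ℝ × ℝ → ℝ be any measurable function such that m_a(X, S₁, S₂) is a version of the conditional expectation of Y given σ(X, S₁, S₂) under the conditional measure P(·|{A=a} ∩ {R₃=1}), and assume m_a(X, S₁(a), S₂(a)) is P-integrable. Then E[Y(1)] − E[Y(0)] = E[ m₁(X, S₁(1), S₂(1)) ] − E[ m₀(X, S₁(0), S₂(0)) ]. -/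
/-!
Fix an arm `a`, write `E = {A = a}`, `T = {R₃ = 1}`, `H = σ(X, A, S₁, S₂)` and
`M = m_a(X, S₁, S₂)`. Because `M` is a version of `E[Y | X, S₁, S₂]` under `P(· | E ∩ T)` and
`A` is constant on `E`, the functions `1_T 1_E M` and `1_T 1_E Y` have the same conditional
expectation given `H`. Sequential missingness factors both as `r₃ · E[1_E · | H]`, and `r₃ > 0`
gives `1_E M = E[1_E Y | H]`. Conditioning further on `X` and using consistency,
`E[1_E m_a(X, S₁(a), S₂(a)) | X] = E[1_E Y(a) | X]`; strong ignorability factors both sides as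
`e_a(X) · E[· | X]`, and `e_a > 0` leaves `E[m_a(X, S₁(a), S₂(a)) | X] = E[Y(a) | X]`, whose
integrals are `E[m_a(X, S₁(a), S₂(a))]` and `E[Y(a)]`.

Both factorizations come from one fact: if `m₁` and `m₂` are conditionally independent given
`m'`, then `P(t | m' ⊔ m₁) = P(t | m')` for `t ∈ m₂`, which is checked on the π-system of
intersections `g ∩ t₁`.
-/

open MeasureTheory ProbabilityTheory Set

namespace MeasurableSpace

variable {Ω : Type*}

lemma isPiSystem_image2_inter (m₁ m₂ : MeasurableSpace Ω) :
    IsPiSystem (image2 (· ∩ ·) {s | MeasurableSet[m₁] s} {s | MeasurableSet[m₂] s}) := by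
  rintro _ ⟨s₁, hs₁, s₂, hs₂, rfl⟩ _ ⟨t₁, ht₁, t₂, ht₂, rfl⟩ -
  exact ⟨s₁ ∩ t₁, hs₁.inter ht₁, s₂ ∩ t₂, hs₂.inter ht₂, inter_inter_inter_comm ..⟩

lemma sup_eq_generateFrom_image2_inter (m₁ m₂ : MeasurableSpace Ω) :
    m₁ ⊔ m₂
      = generateFrom (image2 (· ∩ ·) {s | MeasurableSet[m₁] s} {s | MeasurableSet[m₂] s}) := by
  refine le_antisymm (sup_le ?_ ?_) (generateFrom_le ?_)
  · exact fun s hs ↦ measurableSet_generateFrom ⟨s, hs, univ, .univ, inter_univ s⟩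
  · exact fun s hs ↦ measurableSet_generateFrom ⟨univ, .univ, s, hs, univ_inter s⟩
  · rintro _ ⟨s₁, hs₁, s₂, hs₂, rfl⟩
    exact (le_sup_left (b := m₂) _ hs₁).inter (le_sup_right (a := m₁) _ hs₂)

lemma exists_inter_eq_of_measurableSet_sup_comap {β : Type*} {m : MeasurableSpace Ω}
    {mβ : MeasurableSpace β} {A : Ω → β} (a : β) {s : Set Ω}
    (hs : MeasurableSet[m ⊔ mβ.comap A] s) :
    ∃ t, MeasurableSet[m] t ∧ {ω | A ω = a} ∩ s = {ω | A ω = a} ∩ t := by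
  let ι : {ω | A ω = a} → Ω := Subtype.val
  -- `A` is constant on `{A = a}`, so `σ(A)` leaves no trace there
  have htrace : (m ⊔ mβ.comap A).comap ι = m.comap ι := by
    have hconst : A ∘ ι = fun _ ↦ a := funext fun ω ↦ ω.2
    rw [comap_sup, comap_comp, hconst, comap_const, sup_bot_eq]
  obtain ⟨t, ht, hts⟩ : MeasurableSet[m.comap ι] (ι ⁻¹' s) := htrace ▸ ⟨s, hs, rfl⟩
  exact ⟨t, ht, (Subtype.preimage_coe_eq_preimage_coe_iff.mp hts).symm⟩

end MeasurableSpace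

section SetIntegral

variable {α E : Type*} [NormedAddCommGroup E] [NormedSpace ℝ E] {m m₀ : MeasurableSpace α}
  {μ : Measure α}

theorem setIntegral_eq_setIntegral_of_isPiSystem (hm : m ≤ m₀) {C : Set (Set α)}
    (h_eq : m = MeasurableSpace.generateFrom C) (hC : IsPiSystem C) {f g : α → E}
    (hf : Integrable f μ) (hg : Integrable g μ) (h_univ : ∫ x, f x ∂μ = ∫ x, g x ∂μ)
    (basic : ∀ t ∈ C, ∫ x in t, f x ∂μ = ∫ x in t, g x ∂μ) {t : Set α}
    (ht : MeasurableSet[m] t) : ∫ x in t, f x ∂μ = ∫ x in t, g x ∂μ := by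
  induction t, ht using MeasurableSpace.induction_on_inter h_eq hC with
  | empty => simp
  | basic t ht => exact basic t ht
  | compl t ht h => rw [setIntegral_compl (hm t ht) hf, setIntegral_compl (hm t ht) hg, h, h_univ]
  | iUnion s hd hs h =>
    rw [integral_iUnion (fun i ↦ hm _ (hs i)) hd hf.integrableOn,
      integral_iUnion (fun i ↦ hm _ (hs i)) hd hg.integrableOn]
    exact tsum_congr h

theorem condExp_ae_eq_condExp_of_forall_setIntegral_eq [CompleteSpace E] (hm : m ≤ m₀)
    [SigmaFinite (μ.trim hm)] {f g : α → E} (hf : Integrable f μ) (hg : Integrable g μ)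
    (hfg : ∀ s, MeasurableSet[m] s → ∫ x in s, f x ∂μ = ∫ x in s, g x ∂μ) :
    μ[f | m] =ᵐ[μ] μ[g | m] :=
  ae_eq_condExp_of_forall_setIntegral_eq hm hg (fun _ _ _ ↦ integrable_condExp.integrableOn)
    (fun s hs _ ↦ (setIntegral_condExp hm hf hs).trans (hfg s hs))
    stronglyMeasurable_condExp.aestronglyMeasurable

theorem setIntegral_inter_eq_of_ae_eq_condExp_cond [IsFiniteMeasure μ] (hm : m ≤ m₀)
    [CompleteSpace E] {B : Set α} {f g : α → E} (hf : IntegrableOn f B μ)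
    (hg : g =ᵐ[μ[|B]] μ[|B][f | m]) {s : Set α} (hs : MeasurableSet[m] s) :
    ∫ x in s ∩ B, g x ∂μ = ∫ x in s ∩ B, f x ∂μ := by
  rcases eq_or_ne (μ B) 0 with hB | hB
  · have hnull : μ.restrict (s ∩ B) = 0 :=
      Measure.restrict_eq_zero.mpr (measure_mono_null inter_subset_right hB)
    simp [hnull]
  have hcond : ∀ h : α → E, ∫ x in s, h x ∂μ[|B] = (μ B).toReal⁻¹ • ∫ x in s ∩ B, h x ∂μ := by
    intro h
    rw [ProbabilityTheory.cond, Measure.restrict_smul, integral_smul_measure,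
      Measure.restrict_restrict (hm s hs), ENNReal.toReal_inv]
  have hQ : ∫ x in s, g x ∂μ[|B] = ∫ x in s, f x ∂μ[|B] :=
    (setIntegral_congr_ae (hm s hs) (hg.mono fun _ h _ ↦ h)).trans
      (setIntegral_condExp hm (hf.smul_measure (ENNReal.inv_ne_top.mpr hB)) hs)
  rw [hcond, hcond] at hQ
  exact smul_right_injective E
    (inv_ne_zero (ENNReal.toReal_ne_zero.mpr ⟨hB, measure_ne_top μ B⟩)) hQ

end SetIntegral

lemma Set.indicator_one_mul {Ω M : Type*} [MulZeroOneClass M] (s : Set Ω) (f : Ω → M) :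
    (s.indicator fun _ ↦ (1 : M)) * f = s.indicator f := by
  ext ω; by_cases hω : ω ∈ s <;> simp [hω]

namespace ProbabilityTheory

section

variable {Ω : Type*} {m' m₁ m₂ mΩ : MeasurableSpace Ω} [StandardBorelSpace Ω] {μ : Measure Ω}
  [IsFiniteMeasure μ]

theorem CondIndep.condExp_indicator_sup_ae_eq (hm' : m' ≤ mΩ) (hm₁ : m₁ ≤ mΩ) (hm₂ : m₂ ≤ mΩ)
    (h : CondIndep m' m₁ m₂ hm' μ) {t : Set Ω} (ht : MeasurableSet[m₂] t) :
    μ⟦t | m' ⊔ m₁⟧ =ᵐ[μ] μ⟦t | m'⟧ := by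
  have hti : Integrable (t.indicator fun _ ↦ (1 : ℝ)) μ := (integrable_const 1).indicator (hm₂ t ht)
  have hsm : StronglyMeasurable[m' ⊔ m₁] (μ⟦t | m'⟧) := stronglyMeasurable_condExp.mono le_sup_left
  refine (ae_eq_condExp_of_forall_setIntegral_eq (sup_le hm' hm₁) hti
    (fun _ _ _ ↦ integrable_condExp.integrableOn) (fun s hs _ ↦ ?_)
    hsm.aestronglyMeasurable).symm
  refine setIntegral_eq_setIntegral_of_isPiSystem (sup_le hm' hm₁)
    (MeasurableSpace.sup_eq_generateFrom_image2_inter m' m₁)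
    (MeasurableSpace.isPiSystem_image2_inter m' m₁) integrable_condExp hti (integral_condExp hm')
    ?_ hs
  rintro _ ⟨g, hg, t₁, ht₁, rfl⟩
  have ht₁' : MeasurableSet t₁ := hm₁ t₁ ht₁
  calc ∫ ω in g ∩ t₁, (μ⟦t | m'⟧) ω ∂μ
      = ∫ ω in g, μ[(t₁.indicator fun _ ↦ (1 : ℝ)) * μ⟦t | m'⟧ | m'] ω ∂μ := by
        rw [indicator_one_mul, setIntegral_condExp hm' (integrable_condExp.indicator ht₁') hg,
          setIntegral_indicator ht₁']
    _ = ∫ ω in g, (μ⟦t₁ | m'⟧ * μ⟦t | m'⟧) ω ∂μ := by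
        refine setIntegral_congr_ae (hm' g hg) ((condExp_mul_of_stronglyMeasurable_right
          stronglyMeasurable_condExp ?_ ((integrable_const 1).indicator ht₁')).mono fun _ h _ ↦ h)
        rw [indicator_one_mul]; exact integrable_condExp.indicator ht₁'
    _ = ∫ ω in g, (μ⟦t₁ ∩ t | m'⟧) ω ∂μ :=
        setIntegral_congr_ae (hm' g hg) ((((condIndep_iff m' m₁ m₂ hm' hm₁ hm₂ μ).mp h
          t₁ t ht₁ ht).symm).mono fun _ h _ ↦ h)
    _ = ∫ ω in g ∩ t₁, t.indicator (fun _ ↦ (1 : ℝ)) ω ∂μ := by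
        rw [setIntegral_condExp hm' ((integrable_const 1).indicator (ht₁'.inter (hm₂ t ht))) hg,
          ← indicator_indicator, setIntegral_indicator ht₁']

theorem CondIndep.condExp_indicator_ae_eq_mul (hm' : m' ≤ mΩ) (hm₁ : m₁ ≤ mΩ) (hm₂ : m₂ ≤ mΩ)
    (h : CondIndep m' m₁ m₂ hm' μ) {t : Set Ω} (ht : MeasurableSet[m₂] t) {f : Ω → ℝ}
    (hf : StronglyMeasurable[m' ⊔ m₁] f) (hfi : Integrable f μ) :
    μ[t.indicator f | m'] =ᵐ[μ] μ⟦t | m'⟧ * μ[f | m'] := by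
  have hpull : μ[t.indicator f | m' ⊔ m₁] =ᵐ[μ] μ⟦t | m'⟧ * f := by
    rw [← indicator_one_mul, mul_comm]
    refine (condExp_mul_of_stronglyMeasurable_left hf ?_ ((integrable_const 1).indicator
      (hm₂ t ht))).trans ?_
    · rw [mul_comm, indicator_one_mul]; exact hfi.indicator (hm₂ t ht)
    · filter_upwards [h.condExp_indicator_sup_ae_eq hm' hm₁ hm₂ ht] with ω hω
      simp [hω, mul_comm]
  calc μ[t.indicator f | m'] =ᵐ[μ] μ[μ[t.indicator f | m' ⊔ m₁] | m'] :=
        (condExp_condExp_of_le le_sup_left (sup_le hm' hm₁)).symm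
    _ =ᵐ[μ] μ[μ⟦t | m'⟧ * f | m'] := condExp_congr_ae hpull
    _ =ᵐ[μ] μ⟦t | m'⟧ * μ[f | m'] := condExp_mul_of_stronglyMeasurable_left
        stronglyMeasurable_condExp (integrable_condExp.congr hpull) hfi

theorem CondIndep.condExp_ae_eq_of_condExp_indicator_ae_eq (hm' : m' ≤ mΩ) (hm₁ : m₁ ≤ mΩ)
    (hm₂ : m₂ ≤ mΩ) (h : CondIndep m' m₁ m₂ hm' μ) {t : Set Ω} (ht : MeasurableSet[m₂] t)
    (hpos : ∀ᵐ ω ∂μ, 0 < (μ⟦t | m'⟧) ω) {f g : Ω → ℝ}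
    (hf : StronglyMeasurable[m' ⊔ m₁] f) (hg : StronglyMeasurable[m' ⊔ m₁] g)
    (hfi : Integrable f μ) (hgi : Integrable g μ)
    (hfg : μ[t.indicator f | m'] =ᵐ[μ] μ[t.indicator g | m']) :
    μ[f | m'] =ᵐ[μ] μ[g | m'] := by
  filter_upwards [h.condExp_indicator_ae_eq_mul hm' hm₁ hm₂ ht hf hfi,
    h.condExp_indicator_ae_eq_mul hm' hm₁ hm₂ ht hg hgi, hfg, hpos] with ω hfω hgω hfgω hposω
  rw [hfω, hgω, Pi.mul_apply, Pi.mul_apply] at hfgω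
  exact mul_left_cancel₀ hposω.ne' hfgω

end

theorem indicator_ae_eq_condExp_indicator_of_condIndep {Ω β : Type*} {G H mT mΩ : MeasurableSpace Ω}
    [StandardBorelSpace Ω] {μ : Measure Ω} [IsFiniteMeasure μ] {mβ : MeasurableSpace β}
    [MeasurableSingletonClass β] (hH : H ≤ mΩ) (hmT : mT ≤ mΩ)
    {A : Ω → β} (hGA : G ⊔ mβ.comap A = H) (a : β) {T : Set Ω} (hT : MeasurableSet[mT] T)
    {Yo M : Ω → ℝ} (hYo : Measurable Yo) (hYoi : IntegrableOn Yo {ω | A ω = a} μ)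
    (hM : StronglyMeasurable[G] M) (hMi : IntegrableOn M {ω | A ω = a} μ)
    (hsel : CondIndep H mT (MeasurableSpace.comap Yo inferInstance) hH μ)
    (hpos : ∀ᵐ ω ∂μ, 0 < (μ⟦T | H⟧) ω)
    (hMver : M =ᵐ[μ[|{ω | A ω = a} ∩ T]] (μ[|{ω | A ω = a} ∩ T])[Yo | G]) :
    {ω | A ω = a}.indicator M =ᵐ[μ] μ[{ω | A ω = a}.indicator Yo | H] := by
  set E := {ω | A ω = a}
  have hGH : G ≤ H := hGA ▸ le_sup_left
  have hE : MeasurableSet[H] E :=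
    hGA ▸ le_sup_right (a := G) E ⟨{a}, measurableSet_singleton a, rfl⟩
  have hE' : MeasurableSet E := hH E hE
  have hT' : MeasurableSet T := hmT T hT
  have hMH : StronglyMeasurable[H] (E.indicator M) := (hM.mono hGH).indicator hE
  have hYH : Measurable[H ⊔ MeasurableSpace.comap Yo inferInstance] Yo :=
    Measurable.of_comap_le le_sup_right
  have hMY : StronglyMeasurable[H ⊔ MeasurableSpace.comap Yo inferInstance] (E.indicator Yo) :=
    (hYH.indicator (le_sup_left (a := H) E hE)).stronglyMeasurable
  have hobs : μ[T.indicator (E.indicator M) | H] =ᵐ[μ] μ[T.indicator (E.indicator Yo) | H] := by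
    refine condExp_ae_eq_condExp_of_forall_setIntegral_eq hH
      ((hMi.integrable_indicator hE').indicator hT') ((hYoi.integrable_indicator hE').indicator hT')
      fun s hs ↦ ?_
    obtain ⟨s', hs', hss'⟩ := MeasurableSpace.exists_inter_eq_of_measurableSet_sup_comap a
      (hGA.symm ▸ hs)
    have hset : s ∩ T ∩ E = s' ∩ (E ∩ T) := by
      rw [inter_right_comm, inter_comm s E, hss', inter_comm E s', inter_assoc]
    simp_rw [setIntegral_indicator hT', setIntegral_indicator hE', hset]
    exact setIntegral_inter_eq_of_ae_eq_condExp_cond (hGH.trans hH)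
      (hYoi.mono_set inter_subset_left) hMver hs'
  have hsel' := hsel.symm
  filter_upwards [hsel'.condExp_indicator_ae_eq_mul hH hYo.comap_le hmT hT
      (hMH.mono le_sup_left) (hMi.integrable_indicator hE'),
    hsel'.condExp_indicator_ae_eq_mul hH hYo.comap_le hmT hT hMY
      (hYoi.integrable_indicator hE'), hobs, hpos] with ω hMω hYω hobsω hposω
  rw [hMω, hYω, condExp_of_stronglyMeasurable hH hMH (hMi.integrable_indicator hE'),
    Pi.mul_apply, Pi.mul_apply] at hobsω
  exact mul_left_cancel₀ hposω.ne' hobsω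

end ProbabilityTheory

theorem integral_eq_integral_regression_of_condIndep {Ω 𝓧 : Type*} {mΩ : MeasurableSpace Ω}
    [StandardBorelSpace Ω] {m𝓧 : MeasurableSpace 𝓧} {P : Measure Ω} [IsFiniteMeasure P]
    {X : Ω → 𝓧} (hX : Measurable X) {A : Ω → Bool} (hA : Measurable A) (a : Bool)
    {S₁ S₂ Y : Ω → ℝ} (hS₁ : Measurable S₁) (hS₂ : Measurable S₂) (hY : Measurable Y)
    (hYi : Integrable Y P) {S₁o S₂o Yo : Ω → ℝ} (hS₁o : Measurable S₁o) (hS₂o : Measurable S₂o)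
    (hYo : Measurable Yo) (hcons : ∀ ω, A ω = a → S₁o ω = S₁ ω ∧ S₂o ω = S₂ ω ∧ Yo ω = Y ω)
    {R : Ω → Bool} (hR : Measurable R)
    (hunconf : CondIndep (MeasurableSpace.comap X m𝓧)
      (MeasurableSpace.comap (fun ω => (S₁ ω, S₂ ω, Y ω)) inferInstance)
      (MeasurableSpace.comap A inferInstance) hX.comap_le P)
    (hprop : ∀ᵐ ω ∂P, 0 < (P⟦{ω | A ω = a} | MeasurableSpace.comap X m𝓧⟧) ω)
    (hsel : CondIndep
      (MeasurableSpace.comap X m𝓧 ⊔ MeasurableSpace.comap A inferInstance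
        ⊔ MeasurableSpace.comap S₁o inferInstance ⊔ MeasurableSpace.comap S₂o inferInstance)
      (MeasurableSpace.comap R inferInstance) (MeasurableSpace.comap Yo inferInstance)
      (sup_le (sup_le (sup_le hX.comap_le hA.comap_le) hS₁o.comap_le) hS₂o.comap_le) P)
    (hselpos : ∀ᵐ ω ∂P, 0 < (P⟦{ω | R ω = true} |
      MeasurableSpace.comap X m𝓧 ⊔ MeasurableSpace.comap A inferInstance
        ⊔ MeasurableSpace.comap S₁o inferInstance ⊔ MeasurableSpace.comap S₂o inferInstance⟧) ω)
    {g : 𝓧 × ℝ × ℝ → ℝ} (hg : Measurable g)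
    (hgVer : (fun ω => g (X ω, S₁o ω, S₂o ω)) =ᵐ[P[|{ω | A ω = a} ∩ {ω | R ω = true}]]
      (P[|{ω | A ω = a} ∩ {ω | R ω = true}])[Yo |
        MeasurableSpace.comap X m𝓧 ⊔ MeasurableSpace.comap S₁o inferInstance
          ⊔ MeasurableSpace.comap S₂o inferInstance])
    (hgi : Integrable (fun ω => g (X ω, S₁ ω, S₂ ω)) P) :
    ∫ ω, Y ω ∂P = ∫ ω, g (X ω, S₁ ω, S₂ ω) ∂P := by
  set σX := MeasurableSpace.comap X m𝓧
  set σA := MeasurableSpace.comap A inferInstance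
  set σT := MeasurableSpace.comap (fun ω => (S₁ ω, S₂ ω, Y ω)) inferInstance
  set G := σX ⊔ MeasurableSpace.comap S₁o inferInstance ⊔ MeasurableSpace.comap S₂o inferInstance
  set E := {ω | A ω = a}
  have hGA : G ⊔ σA = σX ⊔ σA ⊔ MeasurableSpace.comap S₁o inferInstance
      ⊔ MeasurableSpace.comap S₂o inferInstance := by
    simp only [G, sup_right_comm _ σA]
  have hXG : Measurable[G] X := Measurable.of_comap_le (le_sup_left.trans le_sup_left)
  have hS₁oG : Measurable[G] S₁o := Measurable.of_comap_le (le_sup_right.trans le_sup_left)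
  have hS₂oG : Measurable[G] S₂o := Measurable.of_comap_le le_sup_right
  have hT : Measurable[σX ⊔ σT] (fun ω => (S₁ ω, S₂ ω, Y ω)) :=
    Measurable.of_comap_le le_sup_right
  have hXT : Measurable[σX ⊔ σT] X := Measurable.of_comap_le le_sup_left
  have hS₁T : Measurable[σX ⊔ σT] S₁ := measurable_fst.comp hT
  have hS₂T : Measurable[σX ⊔ σT] S₂ := measurable_fst.comp (measurable_snd.comp hT)
  have hYT : Measurable[σX ⊔ σT] Y := measurable_snd.comp (measurable_snd.comp hT)
  have hE : MeasurableSet[mΩ] E := hA (measurableSet_singleton a)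
  have hME : E.indicator (fun ω => g (X ω, S₁o ω, S₂o ω))
      = E.indicator (fun ω => g (X ω, S₁ ω, S₂ ω)) :=
    indicator_congr fun ω hω => by simp only [(hcons ω hω).1, (hcons ω hω).2.1]
  have hYE : E.indicator Yo = E.indicator Y := indicator_congr fun ω hω => (hcons ω hω).2.2
  have hMi : IntegrableOn (fun ω => g (X ω, S₁o ω, S₂o ω)) E P := by
    rw [← integrable_indicator_iff hE, hME]; exact hgi.indicator hE
  have hYoi : IntegrableOn Yo E P := by
    rw [← integrable_indicator_iff hE, hYE]; exact hYi.indicator hE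
  have hobs := indicator_ae_eq_condExp_indicator_of_condIndep
    (M := fun ω => g (X ω, S₁o ω, S₂o ω)) _ hR.comap_le hGA a
    ⟨{true}, measurableSet_singleton true, rfl⟩ hYo hYoi
    (hg.comp (hXG.prodMk (hS₁oG.prodMk hS₂oG))).stronglyMeasurable hMi hsel hselpos hgVer
  rw [hME, hYE] at hobs
  have hcons_ind : P[E.indicator (fun ω => g (X ω, S₁ ω, S₂ ω)) | σX]
      =ᵐ[P] P[E.indicator Y | σX] :=
    (condExp_congr_ae hobs).trans (condExp_condExp_of_le
      (le_sup_left.trans (le_sup_left.trans le_sup_left))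
      (sup_le (sup_le (sup_le hX.comap_le hA.comap_le) hS₁o.comap_le) hS₂o.comap_le))
  have hreg : P[fun ω => g (X ω, S₁ ω, S₂ ω) | σX] =ᵐ[P] P[Y | σX] :=
    hunconf.condExp_ae_eq_of_condExp_indicator_ae_eq hX.comap_le
      (hS₁.prodMk (hS₂.prodMk hY)).comap_le hA.comap_le ⟨{a}, measurableSet_singleton a, rfl⟩
      hprop (hg.comp (hXT.prodMk (hS₁T.prodMk hS₂T))).stronglyMeasurable hYT.stronglyMeasurable
      hgi hYi hcons_ind
  calc ∫ ω, Y ω ∂P = ∫ ω, (P[Y | σX]) ω ∂P := (integral_condExp hX.comap_le).symm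
    _ = ∫ ω, (P[fun ω => g (X ω, S₁ ω, S₂ ω) | σX]) ω ∂P := integral_congr_ae hreg.symm
    _ = ∫ ω, g (X ω, S₁ ω, S₂ ω) ∂P := integral_condExp hX.comap_le

theorem stmt2_general
    {Ω 𝓧 : Type*} [mΩ : MeasurableSpace Ω] [StandardBorelSpace Ω]
    [m𝓧 : MeasurableSpace 𝓧]
    (P : Measure Ω) [IsProbabilityMeasure P]
    (X : Ω → 𝓧) (hX : Measurable X)
    (A : Ω → Bool) (hA : Measurable A)
    -- potential outcomes and their observed versions (consistency)
    (S₁ S₂ Y : Bool → Ω → ℝ)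
    (hS₁ : ∀ a, Measurable (S₁ a)) (hS₂ : ∀ a, Measurable (S₂ a))
    (hYmeas : ∀ a, Measurable (Y a)) (hYint : ∀ a, Integrable (Y a) P)
    (S₁o S₂o Yo : Ω → ℝ)
    (hS₁o : Measurable S₁o) (hS₂o : Measurable S₂o) (hYo : Measurable Yo)
    (hcons₁ : S₁o = fun ω => S₁ (A ω) ω)
    (hcons₂ : S₂o = fun ω => S₂ (A ω) ω)
    (hconsY : Yo = fun ω => Y (A ω) ω)
    -- missingness indicators
    (R₃ : Ω → Bool)
    (hR₃ : Measurable R₃)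
    -- Assumption 2 (strong ignorability): (S₁(a), S₂(a), Y(a)) ⫫ A | σ(X), and overlap
    (hunconf : ∀ a : Bool, CondIndep (MeasurableSpace.comap X m𝓧)
      (MeasurableSpace.comap (fun ω => (S₁ a ω, S₂ a ω, Y a ω)) inferInstance)
      (MeasurableSpace.comap A inferInstance) hX.comap_le P)
    (e : Bool → 𝓧 → ℝ)
    (heVer : ∀ a : Bool, (fun ω => e a (X ω)) =ᵐ[P]
      P[({ω | A ω = a}).indicator (fun _ => (1 : ℝ)) | MeasurableSpace.comap X m𝓧])
    (hePos : ∀ a : Bool, ∀ᵐ ω ∂P, 0 < e a (X ω) ∧ e a (X ω) < 1)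
    -- Assumption 4 (sequential missing, observed form)
    (hseq3 : CondIndep
      (MeasurableSpace.comap X m𝓧 ⊔ MeasurableSpace.comap A inferInstance
        ⊔ MeasurableSpace.comap S₁o inferInstance ⊔ MeasurableSpace.comap S₂o inferInstance)
      (MeasurableSpace.comap R₃ inferInstance) (MeasurableSpace.comap Yo inferInstance)
      (sup_le (sup_le (sup_le hX.comap_le hA.comap_le) hS₁o.comap_le) hS₂o.comap_le) P)
    -- positivity of the selection scores
    (hr₃pos : ∀ᵐ ω ∂P, 0 < (P[({ω' | R₃ ω' = true}).indicator (fun _ => (1 : ℝ)) |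
      MeasurableSpace.comap X m𝓧 ⊔ MeasurableSpace.comap A inferInstance
        ⊔ MeasurableSpace.comap S₁o inferInstance ⊔ MeasurableSpace.comap S₂o inferInstance]) ω)
    -- regression functions: versions of E[Y | σ(X,S₁,S₂)] under P(·|{A=a} ∩ {R₃=1})
    (m : Bool → 𝓧 × ℝ × ℝ → ℝ) (hm : ∀ a, Measurable (m a))
    (hmVer : ∀ a : Bool, (fun ω => m a (X ω, S₁o ω, S₂o ω))
      =ᵐ[P[|{ω | A ω = a} ∩ {ω | R₃ ω = true}]]
      (P[|{ω | A ω = a} ∩ {ω | R₃ ω = true}])[Yo |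
        MeasurableSpace.comap X m𝓧 ⊔ MeasurableSpace.comap S₁o inferInstance
          ⊔ MeasurableSpace.comap S₂o inferInstance])
    (hmInt : ∀ a : Bool, Integrable (fun ω => m a (X ω, S₁ a ω, S₂ a ω)) P) :
    ∫ ω, Y true ω ∂P - ∫ ω, Y false ω ∂P
      = ∫ ω, m true (X ω, S₁ true ω, S₂ true ω) ∂P
        - ∫ ω, m false (X ω, S₁ false ω, S₂ false ω) ∂P := by
  have hprop : ∀ a : Bool, ∀ᵐ ω ∂P, 0 < (P⟦{ω | A ω = a} | MeasurableSpace.comap X m𝓧⟧) ω :=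
    fun a ↦ by filter_upwards [hePos a, heVer a] with ω hpos hver using hver ▸ hpos.1
  have hcons : ∀ a ω, A ω = a → S₁o ω = S₁ a ω ∧ S₂o ω = S₂ a ω ∧ Yo ω = Y a ω := by
    rintro a ω rfl
    simp only [hcons₁, hcons₂, hconsY, and_self]
  have harm : ∀ a, ∫ ω, Y a ω ∂P = ∫ ω, m a (X ω, S₁ a ω, S₂ a ω) ∂P := fun a ↦
    integral_eq_integral_regression_of_condIndep hX hA a (hS₁ a) (hS₂ a) (hYmeas a) (hYint a)
      hS₁o hS₂o hYo (hcons a) hR₃ (hunconf a) (hprop a) hseq3 hr₃pos (hm a) (hmVer a) (hmInt a)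
  rw [harm, harm]

/-- **Identifiability of the long-term ATE (Theorem 4.2).** Under monotone missing, strong
ignorability, and sequential missing, `E[Y(1)] − E[Y(0)]` equals
`E[m₁(X, S₁(1), S₂(1))] − E[m₀(X, S₁(0), S₂(0))]`, where `m_a(X,S₁,S₂)` is any version of
`E[Y | σ(X,S₁,S₂)]` under `P(·|{A=a} ∩ {R₃=1})`. (Arm `1` is `true`, arm `0` is `false`.) -/
theorem stmt2
    {Ω 𝓧 : Type*} [mΩ : MeasurableSpace Ω] [StandardBorelSpace Ω] [Nonempty Ω]
    [m𝓧 : MeasurableSpace 𝓧] [StandardBorelSpace 𝓧]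
    (P : Measure Ω) [IsProbabilityMeasure P]
    (X : Ω → 𝓧) (hX : Measurable X)
    (A : Ω → Bool) (hA : Measurable A)
    -- potential outcomes and their observed versions (consistency)
    (S₁ S₂ Y : Bool → Ω → ℝ)
    (hS₁ : ∀ a, Measurable (S₁ a)) (hS₂ : ∀ a, Measurable (S₂ a))
    (hYmeas : ∀ a, Measurable (Y a)) (hYint : ∀ a, Integrable (Y a) P)
    (S₁o S₂o Yo : Ω → ℝ)
    (hS₁o : Measurable S₁o) (hS₂o : Measurable S₂o) (hYo : Measurable Yo)
    (hcons₁ : S₁o = fun ω => S₁ (A ω) ω)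
    (hcons₂ : S₂o = fun ω => S₂ (A ω) ω)
    (hconsY : Yo = fun ω => Y (A ω) ω)
    -- missingness indicators
    (R₁ R₂ R₃ : Ω → Bool)
    (hR₁ : Measurable R₁) (hR₂ : Measurable R₂) (hR₃ : Measurable R₃)
    -- Assumption 1 (monotone missing): R₃ ≤ R₂ ≤ R₁
    (hmono32 : ∀ ω, R₃ ω = true → R₂ ω = true)
    (hmono21 : ∀ ω, R₂ ω = true → R₁ ω = true)
    -- Assumption 2 (strong ignorability): (S₁(a), S₂(a), Y(a)) ⫫ A | σ(X), and overlap
    (hunconf : ∀ a : Bool, CondIndep (MeasurableSpace.comap X m𝓧)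
      (MeasurableSpace.comap (fun ω => (S₁ a ω, S₂ a ω, Y a ω)) inferInstance)
      (MeasurableSpace.comap A inferInstance) hX.comap_le P)
    (e : Bool → 𝓧 → ℝ) (he : ∀ a, Measurable (e a))
    (heVer : ∀ a : Bool, (fun ω => e a (X ω)) =ᵐ[P]
      P[({ω | A ω = a}).indicator (fun _ => (1 : ℝ)) | MeasurableSpace.comap X m𝓧])
    (hePos : ∀ a : Bool, ∀ᵐ ω ∂P, 0 < e a (X ω) ∧ e a (X ω) < 1)
    -- Assumption 4 (sequential missing, observed form)
    (hseq3 : CondIndep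
      (MeasurableSpace.comap X m𝓧 ⊔ MeasurableSpace.comap A inferInstance
        ⊔ MeasurableSpace.comap S₁o inferInstance ⊔ MeasurableSpace.comap S₂o inferInstance)
      (MeasurableSpace.comap R₃ inferInstance) (MeasurableSpace.comap Yo inferInstance)
      (sup_le (sup_le (sup_le hX.comap_le hA.comap_le) hS₁o.comap_le) hS₂o.comap_le) P)
    (hseq2 : CondIndep
      (MeasurableSpace.comap X m𝓧 ⊔ MeasurableSpace.comap A inferInstance
        ⊔ MeasurableSpace.comap S₁o inferInstance)
      (MeasurableSpace.comap R₂ inferInstance) (MeasurableSpace.comap S₂o inferInstance)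
      (sup_le (sup_le hX.comap_le hA.comap_le) hS₁o.comap_le) P)
    (hseq1 : CondIndep (MeasurableSpace.comap X m𝓧 ⊔ MeasurableSpace.comap A inferInstance)
      (MeasurableSpace.comap R₁ inferInstance) (MeasurableSpace.comap S₁o inferInstance)
      (sup_le hX.comap_le hA.comap_le) P)
    -- positivity of the selection scores
    (hr₃pos : ∀ᵐ ω ∂P, 0 < (P[({ω' | R₃ ω' = true}).indicator (fun _ => (1 : ℝ)) |
      MeasurableSpace.comap X m𝓧 ⊔ MeasurableSpace.comap A inferInstance
        ⊔ MeasurableSpace.comap S₁o inferInstance ⊔ MeasurableSpace.comap S₂o inferInstance]) ω)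
    (hr₂pos : ∀ᵐ ω ∂P, 0 < (P[({ω' | R₂ ω' = true}).indicator (fun _ => (1 : ℝ)) |
      MeasurableSpace.comap X m𝓧 ⊔ MeasurableSpace.comap A inferInstance
        ⊔ MeasurableSpace.comap S₁o inferInstance]) ω)
    (hr₁pos : ∀ᵐ ω ∂P, 0 < (P[({ω' | R₁ ω' = true}).indicator (fun _ => (1 : ℝ)) |
      MeasurableSpace.comap X m𝓧 ⊔ MeasurableSpace.comap A inferInstance]) ω)
    -- positive probability of being observed in each arm
    (hab : ∀ a : Bool, 0 < P ({ω | A ω = a} ∩ {ω | R₃ ω = true}))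
    -- regression functions: versions of E[Y | σ(X,S₁,S₂)] under P(·|{A=a} ∩ {R₃=1})
    (m : Bool → 𝓧 × ℝ × ℝ → ℝ) (hm : ∀ a, Measurable (m a))
    (hmVer : ∀ a : Bool, (fun ω => m a (X ω, S₁o ω, S₂o ω))
      =ᵐ[P[|{ω | A ω = a} ∩ {ω | R₃ ω = true}]]
      (P[|{ω | A ω = a} ∩ {ω | R₃ ω = true}])[Yo |
        MeasurableSpace.comap X m𝓧 ⊔ MeasurableSpace.comap S₁o inferInstance
          ⊔ MeasurableSpace.comap S₂o inferInstance])
    (hmInt : ∀ a : Bool, Integrable (fun ω => m a (X ω, S₁ a ω, S₂ a ω)) P) :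
    ∫ ω, Y true ω ∂P - ∫ ω, Y false ω ∂P
      = ∫ ω, m true (X ω, S₁ true ω, S₂ true ω) ∂P
        - ∫ ω, m false (X ω, S₁ false ω, S₂ false ω) ∂P :=
  stmt2_general (mΩ := mΩ) (m𝓧 := m𝓧) P X hX A hA S₁ S₂ Y hS₁ hS₂ hYmeas hYint S₁o S₂o Yo hS₁o hS₂o
    hYo hcons₁ hcons₂ hconsY R₃ hR₃ hunconf e heVer hePos hseq3 hr₃pos m hm hmVer hmInt
end

section
/- Inverse probability weighted representation of the long-term ATE. Assume consistency; that for each a ∈ {0,1}, (S₁(a), S₂(a), Y(a)) ⫫ A | σ(X); and that R₃ ⫫ Y | σ(X, A, S₁, S₂). Let e₁, e₀ : 𝒳 → ℝ be measurable with e_a(X) a version of P(A=a | σ(X)) and e_a(X) > 0 P-a.s. for a ∈ {0,1}, and let r₃ be a σ(X, A, S₁, S₂)-measurable random variable that is a version of P(R₃=1 | σ(X, A, S₁, S₂)) with r₃ > 0 P-a.s. Assume the random variables 𝟙{A=a} · R₃ · Y / (e_a(X) · r₃) are P-integrable for a ∈ {0,1}. Then E[ (𝟙{A=1}/e₁(X)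 − 𝟙{A=0}/e₀(X)) · R₃ · Y / r₃ ] = E[ Y(1) − Y(0) ]. -/
open MeasureTheory ProbabilityTheory

/-!
Condition first on `G = σ(X, A, S₁, S₂)`. Since `R₃ ⫫ Y | G`, `E[R₃ Y | G] = r₃ E[Y | G]`, so the
weight `1 / r₃` cancels, and on `{A = a}` consistency replaces `Y` by `Y(a)`. Then condition on
`σ(X)`: since `Y(a) ⫫ A | X`, `E[𝟙{A=a} Y(a) | X] = e_a(X) E[Y(a) | X]`, so the weight `1 / e_a(X)`
cancels and the tower property leaves `E[Y(a)]`. Both cancellations are instances of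
`E[𝟙_B f | m] = P(B | m) E[f | m]` for `f ⫫ B | m`.
-/

section CondExp

variable {Ω : Type*} {m mΩ : MeasurableSpace Ω} {μ : Measure Ω}

lemma norm_indicator_one_le_one (s : Set Ω) (ω : Ω) :
    ‖s.indicator (fun _ => (1 : ℝ)) ω‖ ≤ 1 :=
  (norm_indicator_le_norm_self _ _).trans_eq norm_one

lemma MeasureTheory.Integrable.indicator_one_mul {f : Ω → ℝ} (hf : Integrable f μ) {s : Set Ω}
    (hs : MeasurableSet s) : Integrable (s.indicator (fun _ => (1 : ℝ)) * f) μ :=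
  hf.bdd_mul (measurable_const.indicator hs).aestronglyMeasurable
    (ae_of_all _ (norm_indicator_one_le_one s))

lemma ae_norm_condExp_indicator_le_one (s : Set Ω) : ∀ᵐ ω ∂μ, ‖(μ⟦s | m⟧) ω‖ ≤ 1 := by
  have h_nonneg : 0 ≤ᵐ[μ] μ⟦s | m⟧ :=
    condExp_nonneg (ae_of_all _ (Set.indicator_nonneg fun _ _ => zero_le_one))
  have h_le : ∀ᵐ ω ∂μ, (μ⟦s | m⟧) ω ≤ 1 :=
    condExp_le_nonneg_const zero_le_one
      (ae_of_all _ (Set.indicator_le_self' fun _ _ => zero_le_one))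
  filter_upwards [h_nonneg, h_le] with ω h₀ h₁
  rw [Real.norm_eq_abs, abs_le]
  exact ⟨(neg_nonpos.mpr zero_le_one).trans h₀, h₁⟩

lemma integral_mul_condExp_of_stronglyMeasurable (hm : m ≤ mΩ) [SigmaFinite (μ.trim hm)]
    {f g : Ω → ℝ} (hf : StronglyMeasurable[m] f) (hfg : Integrable (f * g) μ)
    (hg : Integrable g μ) :
    ∫ ω, f ω * μ[g | m] ω ∂μ = ∫ ω, f ω * g ω ∂μ :=
  (integral_congr_ae (condExp_mul_of_stronglyMeasurable_left hf hfg hg).symm).trans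
    (integral_condExp hm)

lemma condExp_ae_eq_of_forall_setIntegral_eq (hm : m ≤ mΩ) [SigmaFinite (μ.trim hm)]
    {f g : Ω → ℝ} (hf : Integrable f μ) (hg : Integrable g μ)
    (hfg : ∀ s, MeasurableSet[m] s → ∫ ω in s, f ω ∂μ = ∫ ω in s, g ω ∂μ) :
    μ[f | m] =ᵐ[μ] μ[g | m] :=
  ae_eq_condExp_of_forall_setIntegral_eq hm hg (fun _ _ _ => integrable_condExp.integrableOn)
    (fun s hs _ => by rw [setIntegral_condExp hm hf hs, hfg s hs])
    stronglyMeasurable_condExp.aestronglyMeasurable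

end CondExp

section CondIndep

variable {Ω : Type*} {m m₁ m₂ : MeasurableSpace Ω} [mΩ : MeasurableSpace Ω]
  [StandardBorelSpace Ω] {μ : Measure Ω} [IsFiniteMeasure μ]

lemma setIntegral_indicator_condExp_indicator_of_condIndep (hm : m ≤ mΩ) (hm₁ : m₁ ≤ mΩ)
    (hm₂ : m₂ ≤ mΩ) (h : CondIndep m m₁ m₂ hm μ) {s t B : Set Ω} (hs : MeasurableSet[m] s)
    (ht : MeasurableSet[m₁] t) (hB : MeasurableSet[m₂] B) :
    ∫ ω in t, s.indicator (μ⟦B | m⟧) ω ∂μ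
      = ∫ ω in t, (s ∩ B).indicator (fun _ => (1 : ℝ)) ω ∂μ := by
  have hs' := hm s hs
  have ht' := hm₁ t ht
  have hB' := hm₂ B hB
  have h_int : Integrable (t.indicator (fun _ => (1 : ℝ)) * μ⟦B | m⟧) μ :=
    integrable_condExp.indicator_one_mul ht'
  calc ∫ ω in t, s.indicator (μ⟦B | m⟧) ω ∂μ
      = ∫ ω in s, (t.indicator (fun _ => (1 : ℝ)) * μ⟦B | m⟧) ω ∂μ := by
        rw [setIntegral_indicator hs', Set.inter_comm, ← setIntegral_indicator ht']
        exact integral_congr_ae (ae_of_all _ fun ω => by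
          simp only [Pi.mul_apply, ← Set.indicator_mul_left, one_mul])
    _ = ∫ ω in s, μ[t.indicator (fun _ => (1 : ℝ)) * μ⟦B | m⟧ | m] ω ∂μ :=
        (setIntegral_condExp hm h_int hs).symm
    _ = ∫ ω in s, (μ⟦t | m⟧ * μ⟦B | m⟧) ω ∂μ :=
        setIntegral_congr_ae hs' (Filter.Eventually.mono
          (condExp_mul_of_stronglyMeasurable_right stronglyMeasurable_condExp h_int
            ((integrable_const _).indicator ht')) fun _ h _ => h)
    _ = ∫ ω in s, (μ⟦t ∩ B | m⟧) ω ∂μ :=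
        setIntegral_congr_ae hs' (Filter.Eventually.mono
          ((condIndep_iff m m₁ m₂ hm hm₁ hm₂ μ).mp h t B ht hB) fun _ h _ => h.symm)
    _ = ∫ ω in s, (t ∩ B).indicator (fun _ => (1 : ℝ)) ω ∂μ :=
        setIntegral_condExp hm ((integrable_const _).indicator (ht'.inter hB')) hs
    _ = ∫ ω in t, (s ∩ B).indicator (fun _ => (1 : ℝ)) ω ∂μ := by
        rw [setIntegral_indicator (ht'.inter hB'), setIntegral_indicator (hs'.inter hB'),
          Set.inter_left_comm]

lemma setIntegral_condExp_indicator_mul_of_condIndep (hm : m ≤ mΩ) (hm₁ : m₁ ≤ mΩ)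
    (hm₂ : m₂ ≤ mΩ) (h : CondIndep m m₁ m₂ hm μ) {B : Set Ω} (hB : MeasurableSet[m₂] B)
    {f : Ω → ℝ} (hf : StronglyMeasurable[m₁] f) (hf_int : Integrable f μ) {s : Set Ω}
    (hs : MeasurableSet[m] s) :
    ∫ ω in s, (μ⟦B | m⟧ * f) ω ∂μ = ∫ ω in s, (B.indicator (fun _ => (1 : ℝ)) * f) ω ∂μ := by
  have hs' := hm s hs
  have hsB := hs'.inter (hm₂ B hB)
  have h_int_s : Integrable (f * s.indicator (μ⟦B | m⟧)) μ :=
    hf_int.mul_bdd (integrable_condExp.indicator hs').aestronglyMeasurable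
      ((ae_norm_condExp_indicator_le_one B).mono fun _ h =>
        (norm_indicator_le_norm_self _ _).trans h)
  have h_int_sB : Integrable (f * (s ∩ B).indicator (fun _ => (1 : ℝ))) μ :=
    hf_int.mul_bdd (measurable_const.indicator hsB).aestronglyMeasurable
      (ae_of_all _ (norm_indicator_one_le_one _))
  -- `s.indicator μ⟦B | m⟧` and `(s ∩ B).indicator 1` have the same conditional expectation
  -- given `m₁`, and `f` is `m₁`-measurable.
  calc ∫ ω in s, (μ⟦B | m⟧ * f) ω ∂μ
      = ∫ ω, f ω * s.indicator (μ⟦B | m⟧) ω ∂μ := by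
        rw [← integral_indicator hs']
        exact integral_congr_ae (ae_of_all _ fun ω => by
          by_cases hω : ω ∈ s <;> simp [hω, mul_comm])
    _ = ∫ ω, f ω * μ[s.indicator (μ⟦B | m⟧) | m₁] ω ∂μ :=
        (integral_mul_condExp_of_stronglyMeasurable hm₁ hf h_int_s
          (integrable_condExp.indicator hs')).symm
    _ = ∫ ω, f ω * (μ⟦s ∩ B | m₁⟧) ω ∂μ := by
        refine integral_congr_ae ?_
        filter_upwards [condExp_ae_eq_of_forall_setIntegral_eq hm₁
          (integrable_condExp.indicator hs') ((integrable_const _).indicator hsB)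
          fun t ht => setIntegral_indicator_condExp_indicator_of_condIndep hm hm₁ hm₂ h hs ht hB]
          with ω hω
        rw [hω]
    _ = ∫ ω, f ω * (s ∩ B).indicator (fun _ => (1 : ℝ)) ω ∂μ :=
        integral_mul_condExp_of_stronglyMeasurable hm₁ hf h_int_sB
          ((integrable_const _).indicator hsB)
    _ = ∫ ω in s, (B.indicator (fun _ => (1 : ℝ)) * f) ω ∂μ := by
        rw [← integral_indicator hs']
        exact integral_congr_ae (ae_of_all _ fun ω => by
          by_cases hω : ω ∈ s <;> by_cases hωB : ω ∈ B <;> simp [hω, hωB])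

theorem condExp_indicator_mul_of_condIndep (hm : m ≤ mΩ) (hm₁ : m₁ ≤ mΩ) (hm₂ : m₂ ≤ mΩ)
    (h : CondIndep m m₁ m₂ hm μ) {B : Set Ω} (hB : MeasurableSet[m₂] B) {f : Ω → ℝ}
    (hf : StronglyMeasurable[m₁] f) (hf_int : Integrable f μ) :
    μ[B.indicator (fun _ => (1 : ℝ)) * f | m] =ᵐ[μ] μ⟦B | m⟧ * μ[f | m] := by
  have hg_bdd := ae_norm_condExp_indicator_le_one (μ := μ) (m := m) B
  have h_int : Integrable (μ⟦B | m⟧ * f) μ :=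
    hf_int.bdd_mul integrable_condExp.aestronglyMeasurable hg_bdd
  refine (ae_eq_condExp_of_forall_setIntegral_eq hm (hf_int.indicator_one_mul (hm₂ B hB))
    (fun _ _ _ => ?_) (fun s hs _ => ?_)
    (stronglyMeasurable_condExp.mul stronglyMeasurable_condExp).aestronglyMeasurable).symm
  · exact (integrable_condExp.bdd_mul integrable_condExp.aestronglyMeasurable hg_bdd).integrableOn
  · rw [← setIntegral_condExp_indicator_mul_of_condIndep hm hm₁ hm₂ h hB hf hf_int hs,
      ← setIntegral_condExp hm h_int hs]
    exact setIntegral_congr_ae (hm s hs) (Filter.Eventually.mono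
      (condExp_mul_of_stronglyMeasurable_left stronglyMeasurable_condExp h_int hf_int)
      fun _ h _ => h.symm)

end CondIndep

section InverseProbabilityWeighting

variable {Ω : Type*} {mX G mT mA mR mY : MeasurableSpace Ω} [mΩ : MeasurableSpace Ω]
  [StandardBorelSpace Ω] {μ : Measure Ω} [IsFiniteMeasure μ]

lemma condExp_mul_indicator_mul_div_of_condIndep (hG : G ≤ mΩ) (hmR : mR ≤ mΩ)
    (hmY : mY ≤ mΩ) (h : CondIndep G mR mY hG μ) {R : Set Ω} (hR : MeasurableSet[mR] R)
    {Y : Ω → ℝ} (hY : StronglyMeasurable[mY] Y) (hY_int : Integrable Y μ) {φ r : Ω → ℝ}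
    (hφ : Measurable[G] φ) (hr : Measurable[G] r) (hr_pos : ∀ᵐ ω ∂μ, 0 < r ω)
    (hr_eq : r =ᵐ[μ] μ⟦R | G⟧)
    (h_int : Integrable (fun ω => φ ω * R.indicator (fun _ => (1 : ℝ)) ω * Y ω / r ω) μ) :
    μ[fun ω => φ ω * R.indicator (fun _ => (1 : ℝ)) ω * Y ω / r ω | G] =ᵐ[μ] φ * μ[Y | G] := by
  have h_eq : (fun ω => φ ω * R.indicator (fun _ => (1 : ℝ)) ω * Y ω / r ω)
      = (φ / r) * (R.indicator (fun _ => (1 : ℝ)) * Y) := by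
    funext ω
    simp only [Pi.mul_apply, Pi.div_apply]
    ring
  rw [h_eq] at h_int ⊢
  filter_upwards [condExp_mul_of_stronglyMeasurable_left (hφ.div hr).stronglyMeasurable h_int
      (hY_int.indicator_one_mul (hmR R hR)),
    condExp_indicator_mul_of_condIndep hG hmY hmR h.symm hR hY hY_int, hr_eq, hr_pos]
    with ω h_pull h_indep h_r h_pos
  rw [h_pull, Pi.mul_apply, h_indep, Pi.mul_apply, ← h_r, Pi.div_apply, Pi.mul_apply]
  field_simp

lemma integral_inv_mul_condExp_indicator_mul_of_condIndep (hmXG : mX ≤ G) (hG : G ≤ mΩ)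
    (hmT : mT ≤ mΩ) (hmA : mA ≤ mΩ) (h : CondIndep mX mT mA (hmXG.trans hG) μ) {A : Set Ω}
    (hA : MeasurableSet[mA] A) {Y : Ω → ℝ} (hY : StronglyMeasurable[mT] Y)
    (hY_int : Integrable Y μ) {e : Ω → ℝ} (he : Measurable[mX] e) (he_pos : ∀ᵐ ω ∂μ, 0 < e ω)
    (he_eq : e =ᵐ[μ] μ⟦A | mX⟧)
    (h_int : Integrable (fun ω => (e ω)⁻¹ * μ[A.indicator (fun _ => (1 : ℝ)) * Y | G] ω) μ) :
    ∫ ω, (e ω)⁻¹ * μ[A.indicator (fun _ => (1 : ℝ)) * Y | G] ω ∂μ = ∫ ω, Y ω ∂μ := by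
  have hmX := hmXG.trans hG
  have h_ae : μ[fun ω => (e ω)⁻¹ * μ[A.indicator (fun _ => (1 : ℝ)) * Y | G] ω | mX]
      =ᵐ[μ] μ[Y | mX] := by
    filter_upwards [condExp_mul_of_stronglyMeasurable_left (f := fun ω => (e ω)⁻¹)
        he.inv.stronglyMeasurable h_int integrable_condExp,
      condExp_condExp_of_le (f := A.indicator (fun _ => (1 : ℝ)) * Y) hmXG hG,
      condExp_indicator_mul_of_condIndep hmX hmT hmA h hA hY hY_int, he_eq, he_pos]
      with ω h_pull h_tower h_indep h_e h_pos
    refine h_pull.trans ?_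
    rw [Pi.mul_apply, h_tower, h_indep, Pi.mul_apply, ← h_e, inv_mul_cancel_left₀ h_pos.ne']
  calc ∫ ω, (e ω)⁻¹ * μ[A.indicator (fun _ => (1 : ℝ)) * Y | G] ω ∂μ
      = ∫ ω, μ[fun ω => (e ω)⁻¹ * μ[A.indicator (fun _ => (1 : ℝ)) * Y | G] ω | mX] ω ∂μ :=
        (integral_condExp hmX).symm
    _ = ∫ ω, μ[Y | mX] ω ∂μ := integral_congr_ae h_ae
    _ = ∫ ω, Y ω ∂μ := integral_condExp hmX

lemma integral_ipw_eq_of_condIndep (hmXG : mX ≤ G) (hG : G ≤ mΩ) (hmT : mT ≤ mΩ)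
    (hmA : mA ≤ mΩ) (hmAG : mA ≤ G) (hmR : mR ≤ mΩ) (hmY : mY ≤ mΩ)
    (h_unconf : CondIndep mX mT mA (hmXG.trans hG) μ) (h_miss : CondIndep G mR mY hG μ)
    {A R : Set Ω} (hA : MeasurableSet[mA] A) (hR : MeasurableSet[mR] R) {Ya Yo : Ω → ℝ}
    (hYa : StronglyMeasurable[mT] Ya) (hYa_int : Integrable Ya μ)
    (hYo : StronglyMeasurable[mY] Yo) (hYo_int : Integrable Yo μ) (h_cons : ∀ ω ∈ A, Yo ω = Ya ω)
    {e r : Ω → ℝ} (he : Measurable[mX] e) (he_pos : ∀ᵐ ω ∂μ, 0 < e ω)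
    (he_eq : e =ᵐ[μ] μ⟦A | mX⟧) (hr : Measurable[G] r) (hr_pos : ∀ᵐ ω ∂μ, 0 < r ω)
    (hr_eq : r =ᵐ[μ] μ⟦R | G⟧)
    (h_int : Integrable (fun ω => A.indicator (fun _ => (1 : ℝ)) ω
      * R.indicator (fun _ => (1 : ℝ)) ω * Yo ω / (e ω * r ω)) μ) :
    ∫ ω, A.indicator (fun _ => (1 : ℝ)) ω * R.indicator (fun _ => (1 : ℝ)) ω * Yo ω
      / (e ω * r ω) ∂μ = ∫ ω, Ya ω ∂μ := by
  have hA_G : Measurable[G] (A.indicator (fun _ => (1 : ℝ))) :=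
    measurable_const.indicator (hmAG A hA)
  have h_eq : (fun ω => A.indicator (fun _ => (1 : ℝ)) ω * R.indicator (fun _ => (1 : ℝ)) ω
        * Yo ω / (e ω * r ω))
      = fun ω => A.indicator (fun _ => (1 : ℝ)) ω / e ω * R.indicator (fun _ => (1 : ℝ)) ω
        * Yo ω / r ω := by
    funext ω
    ring
  have h_AYo : A.indicator (fun _ => (1 : ℝ)) * Yo = A.indicator (fun _ => (1 : ℝ)) * Ya := by
    funext ω
    by_cases hω : ω ∈ A <;> simp [hω, h_cons]
  have h_condExp : μ[fun ω => A.indicator (fun _ => (1 : ℝ)) ω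
        * R.indicator (fun _ => (1 : ℝ)) ω * Yo ω / (e ω * r ω) | G]
      =ᵐ[μ] fun ω => (e ω)⁻¹ * μ[A.indicator (fun _ => (1 : ℝ)) * Ya | G] ω := by
    rw [h_eq] at h_int ⊢
    filter_upwards [condExp_mul_indicator_mul_div_of_condIndep hG hmR hmY h_miss hR hYo hYo_int
        (hA_G.div (he.mono hmXG le_rfl)) hr hr_pos hr_eq h_int,
      condExp_mul_of_stronglyMeasurable_left hA_G.stronglyMeasurable
        (hYo_int.indicator_one_mul (hmA A hA)) hYo_int] with ω h_weight h_pull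
    refine h_weight.trans ?_
    rw [← h_AYo, h_pull]
    simp only [Pi.mul_apply, Pi.div_apply]
    ring
  calc ∫ ω, A.indicator (fun _ => (1 : ℝ)) ω * R.indicator (fun _ => (1 : ℝ)) ω * Yo ω
        / (e ω * r ω) ∂μ
      = ∫ ω, (e ω)⁻¹ * μ[A.indicator (fun _ => (1 : ℝ)) * Ya | G] ω ∂μ :=
        (integral_condExp hG).symm.trans (integral_congr_ae h_condExp)
    _ = ∫ ω, Ya ω ∂μ :=
        integral_inv_mul_condExp_indicator_mul_of_condIndep hmXG hG hmT hmA h_unconf hA hYa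
          hYa_int he he_pos he_eq (integrable_condExp.congr h_condExp)

end InverseProbabilityWeighting

theorem stmt5_general
    {Ω 𝓧 : Type*} [mΩ : MeasurableSpace Ω] [StandardBorelSpace Ω]
    [m𝓧 : MeasurableSpace 𝓧]
    (P : Measure Ω) [IsProbabilityMeasure P]
    (X : Ω → 𝓧) (hX : Measurable X)
    (A : Ω → Bool) (hA : Measurable A)
    (S₁ S₂ Y : Bool → Ω → ℝ)
    (hYmeas : ∀ a, Measurable (Y a)) (hYint : ∀ a, Integrable (Y a) P)
    (S₁o S₂o Yo : Ω → ℝ)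
    (hS₁o : Measurable S₁o) (hS₂o : Measurable S₂o) (hYo : Measurable Yo)
    (hconsY : Yo = fun ω => Y (A ω) ω)
    (R₃ : Ω → Bool) (hR₃ : Measurable R₃)
    -- unconfoundedness for each arm
    (hunconf : ∀ a : Bool, CondIndep (MeasurableSpace.comap X m𝓧)
      (MeasurableSpace.comap (fun ω => (S₁ a ω, S₂ a ω, Y a ω)) inferInstance)
      (MeasurableSpace.comap A inferInstance) hX.comap_le P)
    -- sequential missingness of the long-term outcome
    (hseq3 : CondIndep
      (MeasurableSpace.comap X m𝓧 ⊔ MeasurableSpace.comap A inferInstance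
        ⊔ MeasurableSpace.comap S₁o inferInstance ⊔ MeasurableSpace.comap S₂o inferInstance)
      (MeasurableSpace.comap R₃ inferInstance) (MeasurableSpace.comap Yo inferInstance)
      (sup_le (sup_le (sup_le hX.comap_le hA.comap_le) hS₁o.comap_le) hS₂o.comap_le) P)
    -- propensity scores
    (e : Bool → 𝓧 → ℝ) (he : ∀ a, Measurable (e a))
    (heVer : ∀ a : Bool, (fun ω => e a (X ω)) =ᵐ[P]
      P[({ω | A ω = a}).indicator (fun _ => (1 : ℝ)) | MeasurableSpace.comap X m𝓧])
    (hePos : ∀ a : Bool, ∀ᵐ ω ∂P, 0 < e a (X ω))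
    -- selection score
    (r₃ : Ω → ℝ)
    (hr₃Meas : Measurable[MeasurableSpace.comap X m𝓧 ⊔ MeasurableSpace.comap A inferInstance
      ⊔ MeasurableSpace.comap S₁o inferInstance ⊔ MeasurableSpace.comap S₂o inferInstance] r₃)
    (hr₃Ver : r₃ =ᵐ[P] P[({ω | R₃ ω = true}).indicator (fun _ => (1 : ℝ)) |
      MeasurableSpace.comap X m𝓧 ⊔ MeasurableSpace.comap A inferInstance
        ⊔ MeasurableSpace.comap S₁o inferInstance ⊔ MeasurableSpace.comap S₂o inferInstance])
    (hr₃Pos : ∀ᵐ ω ∂P, 0 < r₃ ω)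
    -- integrability of the weighted outcomes
    (hWint : ∀ a : Bool, Integrable (fun ω => ({ω' | A ω' = a}).indicator (fun _ => (1 : ℝ)) ω
      * ({ω' | R₃ ω' = true}).indicator (fun _ => (1 : ℝ)) ω * Yo ω / (e a (X ω) * r₃ ω)) P) :
    ∫ ω, (({ω' | A ω' = true}).indicator (fun _ => (1 : ℝ)) ω / e true (X ω)
        - ({ω' | A ω' = false}).indicator (fun _ => (1 : ℝ)) ω / e false (X ω))
        * ({ω' | R₃ ω' = true}).indicator (fun _ => (1 : ℝ)) ω * Yo ω / r₃ ω ∂P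
      = ∫ ω, (Y true ω - Y false ω) ∂P := by
  have hYo_int : Integrable Yo P := by
    refine ((hYint true).norm.add (hYint false).norm).mono' hYo.aestronglyMeasurable
      (ae_of_all _ fun ω => ?_)
    rw [hconsY]
    show ‖Y (A ω) ω‖ ≤ ‖Y true ω‖ + ‖Y false ω‖
    cases A ω
    · exact le_add_of_nonneg_left (norm_nonneg _)
    · exact le_add_of_nonneg_right (norm_nonneg _)
  have h_arm (a : Bool) : ∫ ω, {ω' | A ω' = a}.indicator (fun _ => (1 : ℝ)) ω
      * {ω' | R₃ ω' = true}.indicator (fun _ => (1 : ℝ)) ω * Yo ω / (e a (X ω) * r₃ ω) ∂P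
      = ∫ ω, Y a ω ∂P :=
    integral_ipw_eq_of_condIndep (le_sup_left.trans (le_sup_left.trans le_sup_left)) _
      (hYmeas a).comap_le hA.comap_le (le_sup_right.trans (le_sup_left.trans le_sup_left))
      hR₃.comap_le hYo.comap_le
      (condIndep_of_condIndep_of_le_left (hunconf a) ((measurable_snd.comp measurable_snd).comp
        (comap_measurable fun ω => (S₁ a ω, S₂ a ω, Y a ω))).comap_le)
      hseq3 ⟨{a}, measurableSet_singleton a, rfl⟩ ⟨{true}, measurableSet_singleton true, rfl⟩
      (comap_measurable (Y a)).stronglyMeasurable (hYint a)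
      (comap_measurable Yo).stronglyMeasurable hYo_int
      (fun ω (hω : A ω = a) => show Yo ω = Y a ω by rw [hconsY, ← hω])
      ((he a).comp (comap_measurable X)) (hePos a) (heVer a) hr₃Meas hr₃Pos hr₃Ver (hWint a)
  rw [integral_sub (hYint true) (hYint false), ← h_arm true, ← h_arm false,
    ← integral_sub (hWint true) (hWint false)]
  congr with ω
  ring

/-- **Inverse probability weighted representation of the long-term ATE.** Under
consistency, unconfoundedness for both arms, and sequential missingness, with a.s. positive
propensity scores `e₁(X), e₀(X)` and selection score `r₃`,
`E[(𝟙{A=1}/e₁(X) − 𝟙{A=0}/e₀(X))·R₃·Y/r₃] = E[Y(1) − Y(0)]`.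
(Arm `1` is `true`, arm `0` is `false`.) -/
theorem stmt5
    {Ω 𝓧 : Type*} [mΩ : MeasurableSpace Ω] [StandardBorelSpace Ω] [Nonempty Ω]
    [m𝓧 : MeasurableSpace 𝓧] [StandardBorelSpace 𝓧]
    (P : Measure Ω) [IsProbabilityMeasure P]
    (X : Ω → 𝓧) (hX : Measurable X)
    (A : Ω → Bool) (hA : Measurable A)
    (S₁ S₂ Y : Bool → Ω → ℝ)
    (hS₁ : ∀ a, Measurable (S₁ a)) (hS₂ : ∀ a, Measurable (S₂ a))
    (hYmeas : ∀ a, Measurable (Y a)) (hYint : ∀ a, Integrable (Y a) P)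
    (S₁o S₂o Yo : Ω → ℝ)
    (hS₁o : Measurable S₁o) (hS₂o : Measurable S₂o) (hYo : Measurable Yo)
    (hcons₁ : S₁o = fun ω => S₁ (A ω) ω)
    (hcons₂ : S₂o = fun ω => S₂ (A ω) ω)
    (hconsY : Yo = fun ω => Y (A ω) ω)
    (R₃ : Ω → Bool) (hR₃ : Measurable R₃)
    -- unconfoundedness for each arm
    (hunconf : ∀ a : Bool, CondIndep (MeasurableSpace.comap X m𝓧)
      (MeasurableSpace.comap (fun ω => (S₁ a ω, S₂ a ω, Y a ω)) inferInstance)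
      (MeasurableSpace.comap A inferInstance) hX.comap_le P)
    -- sequential missingness of the long-term outcome
    (hseq3 : CondIndep
      (MeasurableSpace.comap X m𝓧 ⊔ MeasurableSpace.comap A inferInstance
        ⊔ MeasurableSpace.comap S₁o inferInstance ⊔ MeasurableSpace.comap S₂o inferInstance)
      (MeasurableSpace.comap R₃ inferInstance) (MeasurableSpace.comap Yo inferInstance)
      (sup_le (sup_le (sup_le hX.comap_le hA.comap_le) hS₁o.comap_le) hS₂o.comap_le) P)
    -- propensity scores
    (e : Bool → 𝓧 → ℝ) (he : ∀ a, Measurable (e a))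
    (heVer : ∀ a : Bool, (fun ω => e a (X ω)) =ᵐ[P]
      P[({ω | A ω = a}).indicator (fun _ => (1 : ℝ)) | MeasurableSpace.comap X m𝓧])
    (hePos : ∀ a : Bool, ∀ᵐ ω ∂P, 0 < e a (X ω))
    -- selection score
    (r₃ : Ω → ℝ)
    (hr₃Meas : Measurable[MeasurableSpace.comap X m𝓧 ⊔ MeasurableSpace.comap A inferInstance
      ⊔ MeasurableSpace.comap S₁o inferInstance ⊔ MeasurableSpace.comap S₂o inferInstance] r₃)
    (hr₃Ver : r₃ =ᵐ[P] P[({ω | R₃ ω = true}).indicator (fun _ => (1 : ℝ)) |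
      MeasurableSpace.comap X m𝓧 ⊔ MeasurableSpace.comap A inferInstance
        ⊔ MeasurableSpace.comap S₁o inferInstance ⊔ MeasurableSpace.comap S₂o inferInstance])
    (hr₃Pos : ∀ᵐ ω ∂P, 0 < r₃ ω)
    -- integrability of the weighted outcomes
    (hWint : ∀ a : Bool, Integrable (fun ω => ({ω' | A ω' = a}).indicator (fun _ => (1 : ℝ)) ω
      * ({ω' | R₃ ω' = true}).indicator (fun _ => (1 : ℝ)) ω * Yo ω / (e a (X ω) * r₃ ω)) P) :
    ∫ ω, (({ω' | A ω' = true}).indicator (fun _ => (1 : ℝ)) ω / e true (X ω)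
        - ({ω' | A ω' = false}).indicator (fun _ => (1 : ℝ)) ω / e false (X ω))
        * ({ω' | R₃ ω' = true}).indicator (fun _ => (1 : ℝ)) ω * Yo ω / r₃ ω ∂P
      = ∫ ω, (Y true ω - Y false ω) ∂P :=
  stmt5_general (mΩ := mΩ) (m𝓧 := m𝓧) P X hX A hA S₁ S₂ Y hYmeas hYint S₁o S₂o Yo hS₁o hS₂o hYo
    hconsY R₃ hR₃ hunconf hseq3 e he heVer hePos r₃ hr₃Meas hr₃Ver hr₃Pos hWint
end
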